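/- arXiv:2004.06091 — 3 statements merged into one kernel-verified Lean document; each statement's English description precedes it below -/
import Mathlib

section
/- Fix an integer k ≥ 1, probabilities p_1, …, p_k > 0 with Σ_{i=1}^{k} p_i = 1, and a > 0. For ℓ ∈ ℝ^k write E[L] = Σ_{i=1}^{k} p_i ℓ_i and E[L²] = Σ_{i=1}^{k} p_i ℓ_i², and define f(ℓ) = (E[L²] + 2a·E[L] + 2a²)/(2(E[L] + a)) + E[L]. Let F = {ℓ ∈ ℝ^k : ℓ_i ≥ 0 for all i, and Σ_{i=1}^{k} 2^{−ℓ_i} ≤ 1}. If ℓ* ∈ F minimizes f over F, then Σ_{i=1}^{k} 2^{−ℓ*_i} = 1. -/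
/-!
If the Kraft sum of a minimizer `ℓ` were `< 1`, every `ℓ i` would be positive and, by continuity,
the shrunk lengths `t • ℓ` with `t < 1` close to `1` would still be feasible. Since
`2a E[L] + 2a² = 2a (E[L] + a)`, the average age equals `E[L²] / (2 (E[L] + a)) + a + E[L]`, and
shrinking scales `E[L]` by `t` and `E[L²]` by `t²`: the first summand does not grow and `E[L]`
strictly drops, contradicting minimality.
-/

open Filter Topology Set

section Kraft

variable {ι : Type*} [Fintype ι]

lemma pos_of_kraft_sum_lt_one {ℓ : ι → ℝ} (h : ∑ i, (2 : ℝ) ^ (-ℓ i) < 1) (i : ι) :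
    0 < ℓ i := by
  by_contra! hi
  have hterm : (1 : ℝ) ≤ 2 ^ (-ℓ i) := Real.one_le_rpow (by norm_num) (by linarith)
  have hsum : (2 : ℝ) ^ (-ℓ i) ≤ ∑ j, (2 : ℝ) ^ (-ℓ j) :=
    Finset.single_le_sum (f := fun j => (2 : ℝ) ^ (-ℓ j))
      (fun j _ => Real.rpow_nonneg (by norm_num) _) (Finset.mem_univ i)
  linarith

lemma exists_mem_Ioo_kraft_sum_mul_lt_one {ℓ : ι → ℝ} (h : ∑ i, (2 : ℝ) ^ (-ℓ i) < 1) :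
    ∃ t ∈ Ioo (0 : ℝ) 1, ∑ i, (2 : ℝ) ^ (-(t * ℓ i)) < 1 := by
  have hcont : Continuous fun t : ℝ => ∑ i, (2 : ℝ) ^ (-(t * ℓ i)) := by
    fun_prop (disch := norm_num)
  have hnear : ∀ᶠ t in 𝓝 (1 : ℝ), ∑ i, (2 : ℝ) ^ (-(t * ℓ i)) < 1 :=
    hcont.continuousAt.eventually (gt_mem_nhds (by simpa using h))
  have hIoo : ∀ᶠ t in 𝓝[<] (1 : ℝ), t ∈ Ioo 0 1 := Ioo_mem_nhdsLT zero_lt_one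
  exact (hIoo.and (hnear.filter_mono nhdsWithin_le_nhds)).exists

lemma weighted_sum_mul (p ℓ : ι → ℝ) (t : ℝ) (n : ℕ) :
    ∑ i, p i * (t * ℓ i) ^ n = t ^ n * ∑ i, p i * ℓ i ^ n := by
  rw [Finset.mul_sum]
  exact Finset.sum_congr rfl fun i _ => by ring

end Kraft

lemma age_fraction_eq (a m₁ m₂ : ℝ) (h : m₁ + a ≠ 0) :
    (m₂ + 2 * a * m₁ + 2 * a ^ 2) / (2 * (m₁ + a)) = m₂ / (2 * (m₁ + a)) + a := by
  field_simp
  ring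

lemma age_scale_lt {a m₁ m₂ t : ℝ} (ha : 0 < a) (hm₁ : 0 < m₁) (hm₂ : 0 ≤ m₂)
    (ht₀ : 0 < t) (ht₁ : t < 1) :
    (t ^ 2 * m₂ + 2 * a * (t * m₁) + 2 * a ^ 2) / (2 * (t * m₁ + a)) + t * m₁ <
      (m₂ + 2 * a * m₁ + 2 * a ^ 2) / (2 * (m₁ + a)) + m₁ := by
  have htm : 0 < t * m₁ := mul_pos ht₀ hm₁
  rw [age_fraction_eq _ _ _ (by linarith), age_fraction_eq _ _ _ (by linarith)]
  have hfrac : t ^ 2 * m₂ / (2 * (t * m₁ + a)) ≤ m₂ / (2 * (m₁ + a)) := by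
    rw [div_le_div_iff₀ (by linarith) (by linarith)]
    have hscale : t ^ 2 * (m₁ + a) ≤ t * m₁ + a := by
      nlinarith [mul_pos (mul_pos ht₀ (sub_pos.2 ht₁)) hm₁, mul_pos (sub_pos.2 ht₁) ha]
    nlinarith [mul_le_mul_of_nonneg_left hscale hm₂]
  have hdrop : t * m₁ < m₁ := mul_lt_of_lt_one_left hm₁ ht₁
  linarith

theorem stmt_4_general (k : ℕ) (hk : 1 ≤ k)
    (p : Fin k → ℝ) (hp : ∀ i, 0 < p i)
    (a : ℝ) (ha : 0 < a)
    (f : (Fin k → ℝ) → ℝ)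
    (hf : f = fun ℓ =>
      ((∑ i, p i * (ℓ i) ^ 2) + 2 * a * (∑ i, p i * ℓ i) + 2 * a ^ 2) /
        (2 * ((∑ i, p i * ℓ i) + a)) + ∑ i, p i * ℓ i)
    (F : Set (Fin k → ℝ))
    (hF : F = {ℓ | (∀ i, 0 ≤ ℓ i) ∧ ∑ i, (2 : ℝ) ^ (-(ℓ i)) ≤ 1})
    (ℓs : Fin k → ℝ) (hmem : ℓs ∈ F) (hmin : ∀ ℓ ∈ F, f ℓs ≤ f ℓ) :
    ∑ i, (2 : ℝ) ^ (-(ℓs i)) = 1 := by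
  subst hf hF
  by_contra hne
  have hs : ∑ i, (2 : ℝ) ^ (-ℓs i) < 1 := lt_of_le_of_ne hmem.2 hne
  have hpos := pos_of_kraft_sum_lt_one hs
  obtain ⟨t, ⟨ht₀, ht₁⟩, hkraft⟩ := exists_mem_Ioo_kraft_sum_mul_lt_one hs
  have hmin_t := hmin (fun i => t * ℓs i)
    ⟨fun i => (mul_pos ht₀ (hpos i)).le, hkraft.le⟩
  have hm₁ : 0 < ∑ i, p i * ℓs i :=
    Finset.sum_pos (fun i _ => mul_pos (hp i) (hpos i)) ⟨⟨0, hk⟩, Finset.mem_univ _⟩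
  have hm₂ : 0 ≤ ∑ i, p i * ℓs i ^ 2 :=
    Finset.sum_nonneg fun i _ => mul_nonneg (hp i).le (sq_nonneg _)
  have hmean : ∑ i, p i * (t * ℓs i) = t * ∑ i, p i * ℓs i := by
    simpa using weighted_sum_mul p ℓs t 1
  dsimp only at hmin_t
  rw [hmean, weighted_sum_mul p ℓs t 2] at hmin_t
  exact (age_scale_lt ha hm₁ hm₂ ht₀ ht₁).not_ge hmin_t

/-- Lemma 1 of the paper. For probabilities `p i > 0` summing to `1` and
`a > 0`, any minimizer over the Kraft-feasible set
`F = {ℓ : ∀ i, 0 ≤ ℓ i, ∑ i 2^{-ℓ i} ≤ 1}` of the average age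
`f(ℓ) = (E[L²] + 2a E[L] + 2a²)/(2(E[L] + a)) + E[L]` satisfies the Kraft inequality with
equality: `∑ i 2^{-ℓ* i} = 1`. -/
theorem stmt_4 (k : ℕ) (hk : 1 ≤ k)
    (p : Fin k → ℝ) (hp : ∀ i, 0 < p i) (hpsum : ∑ i, p i = 1)
    (a : ℝ) (ha : 0 < a)
    (f : (Fin k → ℝ) → ℝ)
    (hf : f = fun ℓ =>
      ((∑ i, p i * (ℓ i) ^ 2) + 2 * a * (∑ i, p i * ℓ i) + 2 * a ^ 2) /
        (2 * ((∑ i, p i * ℓ i) + a)) + ∑ i, p i * ℓ i)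
    (F : Set (Fin k → ℝ))
    (hF : F = {ℓ | (∀ i, 0 ≤ ℓ i) ∧ ∑ i, (2 : ℝ) ^ (-(ℓ i)) ≤ 1})
    (ℓs : Fin k → ℝ) (hmem : ℓs ∈ F) (hmin : ∀ ℓ ∈ F, f ℓs ≤ f ℓ) :
    ∑ i, (2 : ℝ) ^ (-(ℓs i)) = 1 :=
  stmt_4_general k hk p hp a ha f hf F hF ℓs hmem hmin
end

section
/- Fix an integer k ≥ 1, probabilities p_1, …, p_k > 0 with Σ_{i=1}^{k} p_i = 1, and a > 0. For ℓ ∈ ℝ^k write E[L] = Σ_{i=1}^{k} p_i ℓ_i and E[L²] = Σ_{i=1}^{k} p_i ℓ_i², let F = {ℓ ∈ ℝ^k : ℓ_i ≥ 0 for all i, and Σ_{i=1}^{k} 2^{−ℓ_i} ≤ 1}, define f(ℓ) = (E[L²] + 2a·E[L] + 2a²)/(2(E[L] + a)) + E[L] and g(ℓ, θ) = (1/2)E[L²] + (E[L])² + (2a − θ)E[L] + a² − θa. If inf_{ℓ ∈ F} g(ℓ, θ) = 0 for some θ ∈ ℝ, then inf_{ℓ ∈ F} f(ℓ) = θ. 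-/
/-!
Dinkelbach's fractional-programming argument: on the Kraft set the denominator `E[L] + a` of
the age is at least `a > 0`, and `g(ℓ, θ) = (E[L] + a)(f(ℓ) − θ)`. Hence `inf g = 0` forces
`f ≥ θ` everywhere, while a point with `g < a ε` has `f < θ + ε`.
-/

open Finset

def kraftSet (ι : Type*) [Fintype ι] : Set (ι → ℝ) :=
  {ℓ | (∀ i, 0 ≤ ℓ i) ∧ ∑ i, (2 : ℝ) ^ (-(ℓ i)) ≤ 1}

lemma const_card_mem_kraftSet (ι : Type*) [Fintype ι] :
    (fun _ => (Fintype.card ι : ℝ)) ∈ kraftSet ι := by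
  refine ⟨fun _ => Nat.cast_nonneg _, ?_⟩
  rw [sum_const, card_univ, nsmul_eq_mul, Real.rpow_neg zero_le_two, Real.rpow_natCast,
    mul_inv_le_iff₀ (by positivity), one_mul]
  exact_mod_cast Nat.lt_two_pow_self.le

theorem csInf_image_eq_of_csInf_image_mul_sub_eq_zero {α : Type*} {S : Set α}
    {f g D : α → ℝ} {θ c : ℝ} (hS : S.Nonempty) (hc : 0 < c) (hD : ∀ x ∈ S, c ≤ D x)
    (hg : ∀ x ∈ S, g x = D x * (f x - θ)) (hbdd : BddBelow (g '' S))
    (h0 : sInf (g '' S) = 0) :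
    sInf (f '' S) = θ := by
  have hglb : IsGLB (g '' S) 0 := h0 ▸ isGLB_csInf (hS.image g) hbdd
  refine csInf_eq_of_forall_ge_of_forall_gt_exists_lt (hS.image f) ?_ fun w hw => ?_
  · rintro _ ⟨x, hx, rfl⟩
    have hgx : 0 ≤ D x * (f x - θ) := hg x hx ▸ hglb.1 ⟨x, hx, rfl⟩
    linarith [nonneg_of_mul_nonneg_right hgx (hc.trans_le (hD x hx))]
  · obtain ⟨_, ⟨x, hx, rfl⟩, -, hlt⟩ := hglb.exists_between (mul_pos hc (sub_pos.2 hw))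
    have hDx : D x * (f x - θ) < D x * (w - θ) :=
      calc D x * (f x - θ) = g x := (hg x hx).symm
        _ < c * (w - θ) := hlt
        _ ≤ D x * (w - θ) := mul_le_mul_of_nonneg_right (hD x hx) (sub_pos.2 hw).le
    exact ⟨f x, ⟨x, hx, rfl⟩, by linarith [lt_of_mul_lt_mul_left hDx (hc.le.trans (hD x hx))]⟩

lemma half_add_sq_add_eq_mul_div_add_sub {m s a θ : ℝ} (h : m + a ≠ 0) :
    1 / 2 * s + m ^ 2 + (2 * a - θ) * m + a ^ 2 - θ * a =
      (m + a) * ((s + 2 * a * m + 2 * a ^ 2) / (2 * (m + a)) + m - θ) := by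
  field_simp
  ring

theorem stmt_6_general (k : ℕ)
    (p : Fin k → ℝ) (hp : ∀ i, 0 < p i)
    (a : ℝ) (ha : 0 < a)
    (F : Set (Fin k → ℝ))
    (hF : F = {ℓ | (∀ i, 0 ≤ ℓ i) ∧ ∑ i, (2 : ℝ) ^ (-(ℓ i)) ≤ 1})
    (f : (Fin k → ℝ) → ℝ)
    (hf : f = fun ℓ =>
      ((∑ i, p i * (ℓ i) ^ 2) + 2 * a * (∑ i, p i * ℓ i) + 2 * a ^ 2) /
        (2 * ((∑ i, p i * ℓ i) + a)) + ∑ i, p i * ℓ i)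
    (g : (Fin k → ℝ) → ℝ → ℝ)
    (hg : g = fun ℓ θ =>
      (1 / 2) * (∑ i, p i * (ℓ i) ^ 2) + (∑ i, p i * ℓ i) ^ 2 +
        (2 * a - θ) * (∑ i, p i * ℓ i) + a ^ 2 - θ * a)
    (θ : ℝ) (hzero : sInf ((fun ℓ => g ℓ θ) '' F) = 0) :
    sInf (f '' F) = θ := by
  change F = kraftSet (Fin k) at hF
  subst hF
  have hmean : ∀ ℓ ∈ kraftSet (Fin k), 0 ≤ ∑ i, p i * ℓ i := fun ℓ hℓ =>
    sum_nonneg fun i _ => mul_nonneg (hp i).le (hℓ.1 i)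
  have hsecond : ∀ ℓ : Fin k → ℝ, 0 ≤ ∑ i, p i * ℓ i ^ 2 := fun ℓ =>
    sum_nonneg fun i _ => mul_nonneg (hp i).le (sq_nonneg _)
  have hkey : ∀ ℓ ∈ kraftSet (Fin k), g ℓ θ = (∑ i, p i * ℓ i + a) * (f ℓ - θ) :=
    fun ℓ hℓ => hf ▸ hg ▸ half_add_sq_add_eq_mul_div_add_sub (by linarith [hmean ℓ hℓ])
  refine csInf_image_eq_of_csInf_image_mul_sub_eq_zero ⟨_, const_card_mem_kraftSet _⟩ ha
    (fun ℓ hℓ => by linarith [hmean ℓ hℓ]) hkey ⟨a ^ 2 - θ * a - (2 * a - θ) ^ 2 / 4, ?_⟩ hzero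
  -- Without this bound `hzero` would say nothing: `sInf` of a set unbounded below is `0`.
  rintro _ ⟨ℓ, -, rfl⟩
  subst hg
  nlinarith [hsecond ℓ, sq_nonneg (∑ i, p i * ℓ i + (2 * a - θ) / 2)]

/-- fractional programming. With the Kraft-feasible set
`F = {ℓ : ∀ i, 0 ≤ ℓ i, ∑ i 2^{-ℓ i} ≤ 1}`, the age objective
`f(ℓ) = (E[L²] + 2a E[L] + 2a²)/(2(E[L] + a)) + E[L]` and the auxiliary objective
`g(ℓ, θ) = (1/2)E[L²] + (E[L])² + (2a − θ)E[L] + a² − θa`: if `inf_{ℓ∈F} g(ℓ,θ) = 0` for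
some `θ`, then `inf_{ℓ∈F} f(ℓ) = θ`. -/
theorem stmt_6 (k : ℕ) (hk : 1 ≤ k)
    (p : Fin k → ℝ) (hp : ∀ i, 0 < p i) (hpsum : ∑ i, p i = 1)
    (a : ℝ) (ha : 0 < a)
    (F : Set (Fin k → ℝ))
    (hF : F = {ℓ | (∀ i, 0 ≤ ℓ i) ∧ ∑ i, (2 : ℝ) ^ (-(ℓ i)) ≤ 1})
    (f : (Fin k → ℝ) → ℝ)
    (hf : f = fun ℓ =>
      ((∑ i, p i * (ℓ i) ^ 2) + 2 * a * (∑ i, p i * ℓ i) + 2 * a ^ 2) /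
        (2 * ((∑ i, p i * ℓ i) + a)) + ∑ i, p i * ℓ i)
    (g : (Fin k → ℝ) → ℝ → ℝ)
    (hg : g = fun ℓ θ =>
      (1 / 2) * (∑ i, p i * (ℓ i) ^ 2) + (∑ i, p i * ℓ i) ^ 2 +
        (2 * a - θ) * (∑ i, p i * ℓ i) + a ^ 2 - θ * a)
    (θ : ℝ) (hzero : sInf ((fun ℓ => g ℓ θ) '' F) = 0) :
    sInf (f '' F) = θ :=
  stmt_6_general k p hp a ha F hF f hf g hg θ hzero
end

section
/- Fix an integer k ≥ 1, probabilities p_1, …, p_k > 0 with Σ_{i=1}^{k} p_i = 1, q ∈ (0,1), and λ > 0. For c ≥ 0 let â(c) = c(1/q − 1) + 1/(λq) and d(c) = ((2−q)(1−q)/q²)c² + (4(1−q)/(λq²))c + 2/(λq)². For ℓ ∈ ℝ^k write E[L] = Σ_{i=1}^{k} p_i ℓ_i and E[L²] = Σ_{i=1}^{k} p_i ℓ_i², and define Δ_e(ℓ, c) = (E[L²] + 2â(c)·E[L] + d(c))/(2(E[L] + â(c))) + E[L]. Let G = {(ℓ, c) : ℓ_i ≥ 0 for all i, c ≥ 0,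 and 2^{−c} + Σ_{i=1}^{k} 2^{−ℓ_i} ≤ 1}. If (ℓ*, c*) ∈ G minimizes Δ_e over G, then Σ_{i=1}^{k} 2^{−ℓ*_i} = 1 − 2^{−c*}. -/
/-!
Write `Y = E[L] + â(c)` and `R = E[L²] + (1/q - 1) c²`; since `d(c) = 2 â(c)² + (1/q - 1) c²`,
the average age is `Δ_e = R / (2Y) + Y`. If the Kraft inequality were strict at a minimiser,
three perturbations would stay feasible for small steps: shortening the longest codeword `ℓ_j`,
lengthening `c`, and (when `c > 0`) shortening `c`. Their one-sided first-order conditions read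
`2Y(Y + ℓ_j) ≤ R`, `R ≤ 2Y(Y + c)` and `2Y(Y + c) ≤ R`. The first two give `ℓ_j ≤ c`, so `c > 0`
and every length is at most `c`; but then `E[L²] ≤ c E[L]`, which forces `R < 2Y(Y + c)`.
-/

open Filter Topology Set

theorem HasDerivAt.nonneg_of_isLocalMinOn_Ici {f : ℝ → ℝ} {f' a : ℝ}
    (hf : HasDerivAt f f' a) (h : IsLocalMinOn f (Ici a) a) : 0 ≤ f' := by
  have hcone : (1 : ℝ) ∈ posTangentConeAt (Ici a) a :=
    mem_posTangentConeAt_of_segment_subset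
      ((segment_subset_Icc (by simp)).trans Icc_subset_Ici_self)
  simpa using h.hasFDerivWithinAt_nonneg hf.hasDerivWithinAt.hasFDerivWithinAt hcone

theorem HasDerivAt.div_two_mul_add {R Y : ℝ → ℝ} {R' Y' a : ℝ} (hR : HasDerivAt R R' a)
    (hY : HasDerivAt Y Y' a) (ha : Y a ≠ 0) :
    HasDerivAt (fun t => R t / (2 * Y t) + Y t)
      ((R' * Y a + (2 * Y a ^ 2 - R a) * Y') / (2 * Y a ^ 2)) a :=
  ((hR.div (hY.const_mul 2) (by simpa using ha)).add hY).congr_deriv (by field_simp; ring)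

theorem hasDerivAt_add_mul_add_sq_mul (A B C : ℝ) :
    HasDerivAt (fun t : ℝ => A + t * B + t ^ 2 * C) B 0 :=
  ((((hasDerivAt_id' 0).mul_const B).const_add A).add
    ((hasDerivAt_pow 2 0).mul_const C)).congr_deriv (by simp)

section Kraft

variable {ι : Type*} [Fintype ι]

noncomputable def kraftSum (x : (ι → ℝ) × ℝ) : ℝ :=
  (2 : ℝ) ^ (-x.2) + ∑ i, (2 : ℝ) ^ (-(x.1 i))

def kraftRegion (ι : Type*) [Fintype ι] : Set ((ι → ℝ) × ℝ) :=
  {x | (∀ i, 0 ≤ x.1 i) ∧ 0 ≤ x.2 ∧ kraftSum x ≤ 1}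

theorem continuous_kraftSum : Continuous (kraftSum (ι := ι)) := by
  unfold kraftSum
  fun_prop (disch := norm_num)

theorem pos_of_mem_kraftRegion {x : (ι → ℝ) × ℝ} (hx : x ∈ kraftRegion ι) (i : ι) :
    0 < x.1 i := by
  by_contra! hi
  have hone : 1 ≤ (2 : ℝ) ^ (-(x.1 i)) := Real.one_le_rpow (by norm_num) (by linarith)
  have hsingle : (2 : ℝ) ^ (-(x.1 i)) ≤ ∑ i, (2 : ℝ) ^ (-(x.1 i)) :=
    Finset.single_le_sum (f := fun i => (2 : ℝ) ^ (-(x.1 i))) (fun i _ => by positivity)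
      (Finset.mem_univ i)
  have hc : 0 < (2 : ℝ) ^ (-x.2) := by positivity
  have hkraft : kraftSum x ≤ 1 := hx.2.2
  unfold kraftSum at hkraft
  linarith

theorem eventually_add_smul_mem_kraftRegion {x v : (ι → ℝ) × ℝ} (hx : x ∈ kraftRegion ι)
    (hslack : kraftSum x < 1) (hv₁ : ∀ i, 0 ≤ x.1 i + v.1 i) (hv₂ : 0 ≤ x.2 + v.2) :
    ∀ᶠ t : ℝ in 𝓝[≥] 0, x + t • v ∈ kraftRegion ι := by
  have hcont : Tendsto (fun t : ℝ => kraftSum (x + t • v)) (𝓝 0) (𝓝 (kraftSum x)) :=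
    (continuous_kraftSum.comp (by fun_prop : Continuous fun t : ℝ => x + t • v)).tendsto' 0 _
      (by simp)
  filter_upwards [nhdsWithin_le_nhds (hcont.eventually (gt_mem_nhds hslack)),
    Icc_mem_nhdsGE one_pos] with t hkraft ⟨ht₀, ht₁⟩
  -- for `t ∈ [0, 1]`, `x + t • v = (1 - t) • x + t • (x + v)` is a convex combination
  refine ⟨fun i => ?_, ?_, hkraft.le⟩
  · have := hx.1 i
    have := hv₁ i
    simp only [Prod.fst_add, Prod.smul_fst, Pi.add_apply, Pi.smul_apply, smul_eq_mul]
    nlinarith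
  · have := hx.2.1
    simp only [Prod.snd_add, Prod.smul_snd, smul_eq_mul]
    nlinarith

end Kraft

section AverageAge

variable {ι : Type*} [Fintype ι] (u m : ℝ) (p : ι → ℝ)

-- With `u = 1/q - 1` and `m = 1/(λq)`, `ageMean` is `E[L] + â(c)`, `ageMoment` is
-- `E[L²] + u c²`, and `avgAge` is the paper's `Δ_e` (see `avgAge_eq`).
noncomputable def ageMean (x : (ι → ℝ) × ℝ) : ℝ :=
  ∑ i, p i * x.1 i + (x.2 * u + m)

noncomputable def ageMoment (x : (ι → ℝ) × ℝ) : ℝ :=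
  ∑ i, p i * x.1 i ^ 2 + u * x.2 ^ 2

noncomputable def avgAge (x : (ι → ℝ) × ℝ) : ℝ :=
  ageMoment u p x / (2 * ageMean u m p x) + ageMean u m p x

theorem ageMean_add_smul (x v : (ι → ℝ) × ℝ) (t : ℝ) :
    ageMean u m p (x + t • v) = ageMean u m p x + t * (∑ i, p i * v.1 i + u * v.2) := by
  simp only [ageMean, Prod.fst_add, Prod.snd_add, Prod.smul_fst, Prod.smul_snd, Pi.add_apply,
    Pi.smul_apply, smul_eq_mul, mul_add, Finset.sum_add_distrib, Finset.mul_sum, mul_left_comm t]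
  ring

theorem ageMoment_add_smul (x v : (ι → ℝ) × ℝ) (t : ℝ) :
    ageMoment u p (x + t • v) = ageMoment u p x +
      t * (2 * (∑ i, p i * x.1 i * v.1 i + u * x.2 * v.2)) + t ^ 2 * ageMoment u p v := by
  have hexpand : ∀ i, p i * (x.1 i + t * v.1 i) ^ 2 =
      p i * x.1 i ^ 2 + t * 2 * (p i * x.1 i * v.1 i) + t ^ 2 * (p i * v.1 i ^ 2) := fun i => by
    ring
  simp only [ageMoment, Prod.fst_add, Prod.snd_add, Prod.smul_fst, Prod.smul_snd, Pi.add_apply,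
    Pi.smul_apply, smul_eq_mul, hexpand, Finset.sum_add_distrib, ← Finset.mul_sum]
  ring

theorem hasDerivAt_avgAge_add_smul {x : (ι → ℝ) × ℝ} (hx : ageMean u m p x ≠ 0)
    (v : (ι → ℝ) × ℝ) :
    HasDerivAt (fun t : ℝ => avgAge u m p (x + t • v))
      ((2 * (∑ i, p i * x.1 i * v.1 i + u * x.2 * v.2) * ageMean u m p x +
        (2 * ageMean u m p x ^ 2 - ageMoment u p x) * (∑ i, p i * v.1 i + u * v.2)) /
          (2 * ageMean u m p x ^ 2)) 0 := by
  have hR : HasDerivAt (fun t : ℝ => ageMoment u p (x + t • v))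
      (2 * (∑ i, p i * x.1 i * v.1 i + u * x.2 * v.2)) 0 := by
    simpa only [ageMoment_add_smul] using hasDerivAt_add_mul_add_sq_mul _ _ (ageMoment u p v)
  have hY : HasDerivAt (fun t : ℝ => ageMean u m p (x + t • v))
      (∑ i, p i * v.1 i + u * v.2) 0 := by
    simpa only [ageMean_add_smul, mul_zero, add_zero] using hasDerivAt_add_mul_add_sq_mul _ _ 0
  simpa only [avgAge, zero_smul, add_zero] using hR.div_two_mul_add hY (by simpa using hx)

theorem avgAge_eq {x : (ι → ℝ) × ℝ} (hx : ageMean u m p x ≠ 0) :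
    avgAge u m p x =
      (∑ i, p i * x.1 i ^ 2 + 2 * (x.2 * u + m) * ∑ i, p i * x.1 i +
          (2 * (x.2 * u + m) ^ 2 + u * x.2 ^ 2)) / (2 * (∑ i, p i * x.1 i + (x.2 * u + m))) +
        ∑ i, p i * x.1 i := by
  unfold ageMean at hx
  rw [avgAge, ageMean, ageMoment]
  generalize ∑ i, p i * x.1 i = E at hx ⊢
  generalize x.2 * u + m = a at hx ⊢
  field_simp
  ring

variable {u m p} {x : (ι → ℝ) × ℝ}

theorem ageMean_pos (hp : ∀ i, 0 ≤ p i) (hu : 0 ≤ u) (hm : 0 < m)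
    (hx₁ : ∀ i, 0 ≤ x.1 i) (hx₂ : 0 ≤ x.2) : 0 < ageMean u m p x := by
  have := Finset.sum_nonneg fun i (_ : i ∈ Finset.univ) => mul_nonneg (hp i) (hx₁ i)
  unfold ageMean
  positivity

theorem IsMinOn.avgAge_deriv_nonneg {s : Set ((ι → ℝ) × ℝ)}
    (hmin : IsMinOn (avgAge u m p) s x) (hx : 0 < ageMean u m p x) {v : (ι → ℝ) × ℝ}
    (hv : ∀ᶠ t : ℝ in 𝓝[≥] 0, x + t • v ∈ s) :
    0 ≤ 2 * (∑ i, p i * x.1 i * v.1 i + u * x.2 * v.2) * ageMean u m p x +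
        (2 * ageMean u m p x ^ 2 - ageMoment u p x) * (∑ i, p i * v.1 i + u * v.2) := by
  have hloc : IsLocalMinOn (fun t : ℝ => avgAge u m p (x + t • v)) (Ici 0) 0 := by
    filter_upwards [hv] with t ht
    simpa using hmin ht
  have hderiv := (hasDerivAt_avgAge_add_smul u m p hx.ne' v).nonneg_of_isLocalMinOn_Ici hloc
  simpa using (le_div_iff₀ (by positivity)).1 hderiv

theorem IsMinOn.two_mul_ageMean_mul_add_fst_le_ageMoment [DecidableEq ι]
    (hmin : IsMinOn (avgAge u m p) (kraftRegion ι) x) (hx : x ∈ kraftRegion ι)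
    (hslack : kraftSum x < 1) (hY : 0 < ageMean u m p x) {j : ι} (hpj : 0 < p j) :
    2 * ageMean u m p x * (ageMean u m p x + x.1 j) ≤ ageMoment u p x := by
  have hxv : ∀ i, 0 ≤ x.1 i + (Pi.single j (-x.1 j) : ι → ℝ) i := by
    intro i
    rcases eq_or_ne i j with rfl | hij
    · simp
    · simpa [hij] using hx.1 i
  have h := hmin.avgAge_deriv_nonneg hY (v := (Pi.single j (-x.1 j), 0))
    (eventually_add_smul_mem_kraftRegion hx hslack hxv (by simpa using hx.2.1))
  simp only [Pi.single_apply, mul_ite, mul_zero, Finset.sum_ite_eq', Finset.mem_univ,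
    if_true] at h
  nlinarith [mul_pos hpj (pos_of_mem_kraftRegion hx j)]

theorem IsMinOn.ageMoment_le_two_mul_ageMean_mul_add_snd
    (hmin : IsMinOn (avgAge u m p) (kraftRegion ι) x) (hx : x ∈ kraftRegion ι)
    (hslack : kraftSum x < 1) (hY : 0 < ageMean u m p x) (hu : 0 < u) :
    ageMoment u p x ≤ 2 * ageMean u m p x * (ageMean u m p x + x.2) := by
  have h := hmin.avgAge_deriv_nonneg hY (v := (0, 1))
    (eventually_add_smul_mem_kraftRegion hx hslack (by simpa using hx.1) (by linarith [hx.2.1]))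
  simp only [Pi.zero_apply, mul_zero, Finset.sum_const_zero, mul_one, zero_add] at h
  nlinarith

theorem IsMinOn.two_mul_ageMean_mul_add_snd_le_ageMoment
    (hmin : IsMinOn (avgAge u m p) (kraftRegion ι) x) (hx : x ∈ kraftRegion ι)
    (hslack : kraftSum x < 1) (hY : 0 < ageMean u m p x) (hu : 0 < u) (hc : 0 < x.2) :
    2 * ageMean u m p x * (ageMean u m p x + x.2) ≤ ageMoment u p x := by
  have h := hmin.avgAge_deriv_nonneg hY (v := (0, -x.2))
    (eventually_add_smul_mem_kraftRegion hx hslack (by simpa using hx.1) (by simp))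
  simp only [Pi.zero_apply, mul_zero, Finset.sum_const_zero, mul_neg, zero_add, neg_mul,
    le_add_neg_iff_add_le] at h
  nlinarith [mul_pos hu hc]

theorem ageMoment_lt_two_mul_ageMean_mul_add_snd (hp : ∀ i, 0 ≤ p i) (hu : 0 < u) (hm : 0 < m)
    (hx₁ : ∀ i, 0 ≤ x.1 i) (hc : 0 < x.2) (hle : ∀ i, x.1 i ≤ x.2) :
    ageMoment u p x < 2 * ageMean u m p x * (ageMean u m p x + x.2) := by
  have hE : 0 ≤ ∑ i, p i * x.1 i := Finset.sum_nonneg fun i _ => mul_nonneg (hp i) (hx₁ i)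
  have hS : ∑ i, p i * x.1 i ^ 2 ≤ x.2 * ∑ i, p i * x.1 i := by
    rw [Finset.mul_sum]
    refine Finset.sum_le_sum fun i _ => ?_
    nlinarith [mul_nonneg (mul_nonneg (hp i) (hx₁ i)) (sub_nonneg.2 (hle i))]
  have hY := ageMean_pos hp hu.le hm hx₁ hc.le
  unfold ageMoment
  unfold ageMean at hY ⊢
  nlinarith [mul_pos hc hm, mul_nonneg hc.le hE, mul_pos hu (pow_pos hc 2)]

theorem kraftSum_eq_one_of_isMinOn_avgAge [Nonempty ι] (hp : ∀ i, 0 < p i) (hu : 0 < u)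
    (hm : 0 < m) (hx : x ∈ kraftRegion ι) (hmin : IsMinOn (avgAge u m p) (kraftRegion ι) x) :
    kraftSum x = 1 := by
  classical
  by_contra hne
  have hslack : kraftSum x < 1 := lt_of_le_of_ne hx.2.2 hne
  have hY := ageMean_pos (fun i => (hp i).le) hu.le hm hx.1 hx.2.1
  obtain ⟨j, -, hj⟩ := Finset.exists_max_image Finset.univ x.1 Finset.univ_nonempty
  have hshorten := hmin.two_mul_ageMean_mul_add_fst_le_ageMoment hx hslack hY (hp j)
  have hlengthen := hmin.ageMoment_le_two_mul_ageMean_mul_add_snd hx hslack hY hu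
  have hjc : x.1 j ≤ x.2 := by nlinarith
  have hc : 0 < x.2 := (pos_of_mem_kraftRegion hx j).trans_le hjc
  have hshrink := hmin.two_mul_ageMean_mul_add_snd_le_ageMoment hx hslack hY hu hc
  have hlt := ageMoment_lt_two_mul_ageMean_mul_add_snd (m := m) (fun i => (hp i).le) hu hm
    hx.1 hc fun i => (hj i (Finset.mem_univ i)).trans hjc
  linarith

end AverageAge

theorem waitingTime_sq_moment {q lam : ℝ} (hq : q ≠ 0) (hlam : lam ≠ 0) (c : ℝ) :
    ((2 - q) * (1 - q) / q ^ 2) * c ^ 2 + (4 * (1 - q) / (lam * q ^ 2)) * c + 2 / (lam * q) ^ 2 =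
      2 * (c * (1 / q - 1) + 1 / (lam * q)) ^ 2 + (1 / q - 1) * c ^ 2 := by
  field_simp
  ring

theorem stmt_12_general (k : ℕ) (hk : 1 ≤ k)
    (p : Fin k → ℝ) (hp : ∀ i, 0 < p i)
    (q lam : ℝ) (hq0 : 0 < q) (hq1 : q < 1) (hlam : 0 < lam)
    (ahat d : ℝ → ℝ)
    (hahat : ahat = fun c => c * (1 / q - 1) + 1 / (lam * q))
    (hd : d = fun c => ((2 - q) * (1 - q) / q ^ 2) * c ^ 2 +
      (4 * (1 - q) / (lam * q ^ 2)) * c + 2 / (lam * q) ^ 2)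
    (Δe : (Fin k → ℝ) → ℝ → ℝ)
    (hΔe : Δe = fun ℓ c =>
      ((∑ i, p i * (ℓ i) ^ 2) + 2 * ahat c * (∑ i, p i * ℓ i) + d c) /
        (2 * ((∑ i, p i * ℓ i) + ahat c)) + ∑ i, p i * ℓ i)
    (G : Set ((Fin k → ℝ) × ℝ))
    (hG : G = {x | (∀ i, 0 ≤ x.1 i) ∧ 0 ≤ x.2 ∧
      (2 : ℝ) ^ (-x.2) + ∑ i, (2 : ℝ) ^ (-(x.1 i)) ≤ 1})
    (ℓs : Fin k → ℝ) (cs : ℝ) (hmem : (ℓs, cs) ∈ G)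
    (hmin : ∀ x ∈ G, Δe ℓs cs ≤ Δe x.1 x.2) :
    ∑ i, (2 : ℝ) ^ (-(ℓs i)) = 1 - (2 : ℝ) ^ (-cs) := by
  obtain rfl : G = kraftRegion (Fin k) := hG
  have hu : 0 < 1 / q - 1 := sub_pos.2 (one_lt_one_div hq0 hq1)
  have hm : 0 < 1 / (lam * q) := by positivity
  have hΔe_eq : ∀ x ∈ kraftRegion (Fin k),
      Δe x.1 x.2 = avgAge (1 / q - 1) (1 / (lam * q)) p x := by
    intro x hx
    have hY := ageMean_pos (fun i => (hp i).le) hu.le hm hx.1 hx.2.1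
    rw [hΔe, hahat, hd, avgAge_eq _ _ _ hY.ne']
    simp only [waitingTime_sq_moment hq0.ne' hlam.ne']
  have hopt : IsMinOn (avgAge (1 / q - 1) (1 / (lam * q)) p) (kraftRegion (Fin k)) (ℓs, cs) :=
    isMinOn_iff.2 fun x hx => by
      rw [← hΔe_eq x hx, ← hΔe_eq _ hmem]
      exact hmin x hx
  have : Nonempty (Fin k) := ⟨⟨0, hk⟩⟩
  have hkraft := kraftSum_eq_one_of_isMinOn_avgAge hp hu hm hmem hopt
  rw [kraftSum] at hkraft
  linarith

/-- Lemma 2 of the paper. With waiting-time moments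
`â(c) = c(1/q − 1) + 1/(λq)` and `d(c) = ((2−q)(1−q)/q²)c² + (4(1−q)/(λq²))c + 2/(λq)²`, the
average age `Δ_e(ℓ, c) = (E[L²] + 2â(c)E[L] + d(c))/(2(E[L] + â(c))) + E[L]` over the
Kraft-feasible set `G = {(ℓ, c) : ℓ ≥ 0, c ≥ 0, 2^{−c} + ∑ i 2^{−ℓ i} ≤ 1}` is minimized only
at points satisfying the Kraft inequality with equality: `∑ i 2^{−ℓ* i} = 1 − 2^{−c*}`. -/
theorem stmt_12 (k : ℕ) (hk : 1 ≤ k)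
    (p : Fin k → ℝ) (hp : ∀ i, 0 < p i) (hpsum : ∑ i, p i = 1)
    (q lam : ℝ) (hq0 : 0 < q) (hq1 : q < 1) (hlam : 0 < lam)
    (ahat d : ℝ → ℝ)
    (hahat : ahat = fun c => c * (1 / q - 1) + 1 / (lam * q))
    (hd : d = fun c => ((2 - q) * (1 - q) / q ^ 2) * c ^ 2 +
      (4 * (1 - q) / (lam * q ^ 2)) * c + 2 / (lam * q) ^ 2)
    (Δe : (Fin k → ℝ) → ℝ → ℝ)
    (hΔe : Δe = fun ℓ c =>
      ((∑ i, p i * (ℓ i) ^ 2) + 2 * ahat c * (∑ i, p i * ℓ i) + d c) /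
        (2 * ((∑ i, p i * ℓ i) + ahat c)) + ∑ i, p i * ℓ i)
    (G : Set ((Fin k → ℝ) × ℝ))
    (hG : G = {x | (∀ i, 0 ≤ x.1 i) ∧ 0 ≤ x.2 ∧
      (2 : ℝ) ^ (-x.2) + ∑ i, (2 : ℝ) ^ (-(x.1 i)) ≤ 1})
    (ℓs : Fin k → ℝ) (cs : ℝ) (hmem : (ℓs, cs) ∈ G)
    (hmin : ∀ x ∈ G, Δe ℓs cs ≤ Δe x.1 x.2) :
    ∑ i, (2 : ℝ) ^ (-(ℓs i)) = 1 - (2 : ℝ) ^ (-cs) :=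
  stmt_12_general k hk p hp q lam hq0 hq1 hlam ahat d hahat hd Δe hΔe G hG ℓs cs hmem hmin
end
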